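/- If r₁ = r₂ = r₃ = r > r₄ = r₅ = s ≥ 0 are nonnegative integers, then ∑_{k≥0} 1/((k+r+1)³(k+s+1)²) = (1/(r-s)³)·(ζ(2) - ∑_{j=1}^{s} 1/j²) - (3/(r-s)⁴)·∑_{j=s+1}^{r} 1/j + (2/(r-s)³)·(ζ(2) - ∑_{j=1}^{r} 1/j²) + (1/(r-s)²)·(ζ(3) - ∑_{j=1}^{r} 1/j³). -/

import Mathlib

/-!
Put `x = k + r + 1`, `y = k + s + 1`, so that `x - y = r - s` is independent of `k`.
The partial fraction decomposition of `1 / (x³ y²)` splits the summand into shifted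
`ζ(2)`- and `ζ(3)`-tails, which are `ζ(m)` minus a finite sum, and a multiple of
`1 / y - 1 / x`, whose series telescopes to `∑_{j=s+1}^{r} 1 / j`.
-/

open Finset Filter Topology

lemma sum_range_sub_nat_add {G : Type*} [AddCommGroup G] (g : ℕ → G) (t n : ℕ) :
    ∑ k ∈ range n, (g k - g (k + t)) = ∑ i ∈ range t, g i - ∑ i ∈ range t, g (n + i) := by
  have h₁ := sum_range_add g t n
  have h₂ := sum_range_add g n t
  rw [add_comm t n, h₂] at h₁
  rw [sum_sub_distrib]
  simp only [add_comm _ t]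
  rw [eq_sub_iff_add_eq, sub_add_eq_add_sub, sub_eq_iff_eq_add, ← h₁]

lemma hasSum_sub_nat_add_of_antitone {g : ℕ → ℝ} (hg : Antitone g)
    (hlim : Tendsto g atTop (𝓝 0)) (t : ℕ) :
    HasSum (fun k ↦ g k - g (k + t)) (∑ i ∈ range t, g i) := by
  rw [hasSum_iff_tendsto_nat_of_nonneg (fun k ↦ sub_nonneg.2 (hg (k.le_add_right t)))]
  simp only [sum_range_sub_nat_add]
  have htail : Tendsto (fun n ↦ ∑ i ∈ range t, g (n + i)) atTop (𝓝 0) := by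
    simpa using tendsto_finsetSum (range t) fun i _ ↦ hlim.comp (tendsto_add_atTop_nat i)
  simpa using (tendsto_const_nhds (x := ∑ i ∈ range t, g i)).sub htail

lemma hasSum_one_div_add_pow (p m : ℕ) (hp : 1 < p) :
    HasSum (fun k : ℕ ↦ 1 / ((k : ℝ) + m + 1) ^ p)
      ((∑' n : ℕ, 1 / ((n : ℝ) + 1) ^ p) - ∑ j ∈ Icc 1 m, 1 / (j : ℝ) ^ p) := by
  have hf : Summable fun n : ℕ ↦ 1 / ((n : ℝ) + 1) ^ p := by
    simpa using (summable_nat_add_iff 1).2 (Real.summable_one_div_nat_pow.2 hp)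
  have hshift := (hasSum_nat_add_iff' m).2 hf.hasSum
  rw [← Ico_add_one_right_eq_Icc, sum_Ico_eq_sum_range, Nat.add_sub_cancel]
  push_cast at hshift ⊢
  simpa only [add_comm (1 : ℝ)] using hshift

lemma hasSum_one_div_add_sub_one_div_add {r s : ℕ} (h : s ≤ r) :
    HasSum (fun k : ℕ ↦ 1 / ((k : ℝ) + s + 1) - 1 / ((k : ℝ) + r + 1))
      (∑ j ∈ Icc (s + 1) r, 1 / (j : ℝ)) := by
  have hg : Antitone fun k : ℕ ↦ 1 / ((k : ℝ) + s + 1) := fun a b hab ↦ by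
    dsimp only
    gcongr
  have hlim : Tendsto (fun k : ℕ ↦ 1 / ((k : ℝ) + s + 1)) atTop (𝓝 0) := by
    refine (tendsto_one_div_add_atTop_nhds_zero_nat.comp (tendsto_add_atTop_nat s)).congr
      fun k ↦ ?_
    simp
  convert hasSum_sub_nat_add_of_antitone hg hlim (r - s) using 1
  · ext k; push_cast [h]; ring_nf
  · rw [← Ico_add_one_right_eq_Icc, sum_Ico_eq_sum_range, Nat.add_sub_add_right]
    refine sum_congr rfl fun i _ ↦ ?_
    push_cast; ring_nf

lemma one_div_pow_three_mul_pow_two {x y : ℝ} (hx : x ≠ 0) (hy : y ≠ 0) (hxy : x ≠ y) :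
    1 / (x ^ 3 * y ^ 2) =
      1 / (x - y) ^ 3 * (1 / y ^ 2) - 3 / (x - y) ^ 4 * (1 / y - 1 / x)
        + 2 / (x - y) ^ 3 * (1 / x ^ 2) + 1 / (x - y) ^ 2 * (1 / x ^ 3) := by
  have hd : x - y ≠ 0 := sub_ne_zero.2 hxy
  field_simp
  ring

theorem tsum_three_two (r s : ℕ) (h : s < r) :
    (∑' k : ℕ, 1 / (((k : ℝ) + r + 1) ^ 3 * ((k : ℝ) + s + 1) ^ 2)) =
      (1 / ((r : ℝ) - s) ^ 3) *
          ((∑' n : ℕ, 1 / ((n : ℝ) + 1) ^ 2) - ∑ j ∈ Finset.Icc 1 s, 1 / (j : ℝ) ^ 2)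
      - (3 / ((r : ℝ) - s) ^ 4) * (∑ j ∈ Finset.Icc (s + 1) r, 1 / (j : ℝ))
      + (2 / ((r : ℝ) - s) ^ 3) *
          ((∑' n : ℕ, 1 / ((n : ℝ) + 1) ^ 2) - ∑ j ∈ Finset.Icc 1 r, 1 / (j : ℝ) ^ 2)
      + (1 / ((r : ℝ) - s) ^ 2) *
          ((∑' n : ℕ, 1 / ((n : ℝ) + 1) ^ 3) - ∑ j ∈ Finset.Icc 1 r, 1 / (j : ℝ) ^ 3) := by
  have hrs : ∀ k : ℕ, ((k : ℝ) + r + 1) - ((k : ℝ) + s + 1) = r - s := fun k ↦ by ring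
  have hsum := ((((hasSum_one_div_add_pow 2 s one_lt_two).mul_left (1 / ((r : ℝ) - s) ^ 3)).sub
    ((hasSum_one_div_add_sub_one_div_add h.le).mul_left (3 / ((r : ℝ) - s) ^ 4))).add
    ((hasSum_one_div_add_pow 2 r one_lt_two).mul_left (2 / ((r : ℝ) - s) ^ 3))).add
    ((hasSum_one_div_add_pow 3 r (by norm_num)).mul_left (1 / ((r : ℝ) - s) ^ 2))
  refine (tsum_congr fun k ↦ ?_).trans hsum.tsum_eq
  have hne : (k : ℝ) + r + 1 ≠ (k : ℝ) + s + 1 := by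
    rw [← sub_ne_zero, hrs, sub_ne_zero]; exact_mod_cast h.ne'
  simpa only [hrs] using one_div_pow_three_mul_pow_two (by positivity) (by positivity) hne
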